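/- Let μ and ν be the Gaussian measures N(0, σ²I_d) and N(v, σ²I_d) on ℝ^d with σ > 0. Then for any measurable set A ⊆ ℝ^d, |μ(A) - ν(A)| ≤ ‖v‖₂/(2σ). -/

import Mathlib

open MeasureTheory ProbabilityTheory Real
open scoped NNReal

/-! Le Cam's inequality: with p, q the densities and B = ∫ √(p q) their Bhattacharyya
coefficient, |P(A) - Q(A)| ≤ ½ ∫ |p - q|, and writing |p - q| = |√p - √q| (√p + √q),
Cauchy–Schwarz gives ∫ |p - q| ≤ √(2 - 2B) √(2 + 2B) = 2 √(1 - B²). For the two Gaussians B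
factorises over the coordinates, and completing the square in each one gives
B = exp (-‖v‖² / (8σ²)); finally 1 - B² = 1 - exp (-‖v‖² / (4σ²)) ≤ ‖v‖² / (4σ²). -/

theorem Real.one_sub_exp_neg_sq_le (t : ℝ) : 1 - exp (-t) ^ 2 ≤ 2 * t := by
  have h := one_sub_le_exp_neg (2 * t)
  rw [← exp_nat_mul, Nat.cast_ofNat, mul_neg]
  linarith

namespace MeasureTheory

variable {α : Type*} [MeasurableSpace α] {μ : Measure α}

theorem integral_mul_le_sqrt_mul_sqrt {f g : α → ℝ} (hf₀ : 0 ≤ᵐ[μ] f) (hg₀ : 0 ≤ᵐ[μ] g)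
    (hf : MemLp f 2 μ) (hg : MemLp g 2 μ) :
    ∫ x, f x * g x ∂μ ≤ √(∫ x, f x ^ 2 ∂μ) * √(∫ x, g x ^ 2 ∂μ) := by
  have := integral_mul_le_Lp_mul_Lq_of_nonneg Real.HolderConjugate.two_two hf₀ hg₀
    (by simpa using hf) (by simpa using hg)
  simpa only [Real.rpow_two, Real.sqrt_eq_rpow, one_div] using this

theorem abs_setIntegral_sub_le_half_integral_abs_sub {p q : α → ℝ} (hp : Integrable p μ)
    (hq : Integrable q μ) (hpq : ∫ x, p x ∂μ = ∫ x, q x ∂μ) {A : Set α} (hA : MeasurableSet A) :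
    |∫ x in A, p x ∂μ - ∫ x in A, q x ∂μ| ≤ (∫ x, |p x - q x| ∂μ) / 2 := by
  have hpq' : Integrable (fun x => p x - q x) μ := hp.sub hq
  have hcompl : ∫ x in Aᶜ, (p x - q x) ∂μ = -∫ x in A, (p x - q x) ∂μ := by
    have := integral_add_compl hA hpq'
    rw [integral_sub hp hq, hpq, sub_self] at this
    linarith
  have hsplit := integral_add_compl hA hpq'.abs
  have hin := abs_integral_le_integral_abs (f := fun x => p x - q x) (μ := μ.restrict A)
  have hout := abs_integral_le_integral_abs (f := fun x => p x - q x) (μ := μ.restrict Aᶜ)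
  rw [hcompl, abs_neg] at hout
  rw [← integral_sub hp.integrableOn hq.integrableOn]
  linarith

noncomputable def bhattacharyyaCoeff (μ : Measure α) (p q : α → ℝ) : ℝ := ∫ x, √(p x * q x) ∂μ

theorem memLp_two_sqrt_of_integrable {p : α → ℝ} (hp₀ : 0 ≤ p) (hp : Integrable p μ) :
    MemLp (fun x => √(p x)) 2 μ := by
  refine (memLp_two_iff_integrable_sq (continuous_sqrt.comp_aestronglyMeasurable
    hp.aestronglyMeasurable)).2 ?_
  simpa only [sq_sqrt (hp₀ _)] using hp

theorem integral_abs_sub_le_two_mul_sqrt_one_sub_bhattacharyyaCoeff_sq {p q : α → ℝ}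
    (hp₀ : 0 ≤ p) (hq₀ : 0 ≤ q) (hp : Integrable p μ) (hq : Integrable q μ)
    (hp₁ : ∫ x, p x ∂μ = 1) (hq₁ : ∫ x, q x ∂μ = 1) :
    ∫ x, |p x - q x| ∂μ ≤ 2 * √(1 - bhattacharyyaCoeff μ p q ^ 2) := by
  have hf := memLp_two_sqrt_of_integrable hp₀ hp
  have hg := memLp_two_sqrt_of_integrable hq₀ hq
  have hfg : Integrable (fun x => √(p x) * √(q x)) μ := hf.integrable_mul hg
  have hB : ∫ x, √(p x) * √(q x) ∂μ = bhattacharyyaCoeff μ p q := by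
    simp only [bhattacharyyaCoeff, ← sqrt_mul (hp₀ _)]
  have hB₀ : 0 ≤ bhattacharyyaCoeff μ p q := integral_nonneg fun _ => sqrt_nonneg _
  have hdiff : ∫ x, |√(p x) - √(q x)| ^ 2 ∂μ = 2 - 2 * bhattacharyyaCoeff μ p q := by
    have hpt : ∀ x, |√(p x) - √(q x)| ^ 2 = p x + q x - 2 * (√(p x) * √(q x)) := fun x => by
      rw [sq_abs, sub_sq, sq_sqrt (hp₀ x), sq_sqrt (hq₀ x)]; ring
    simp only [hpt]
    rw [integral_sub (f := fun x => p x + q x) (hp.add hq) (hfg.const_mul 2),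
      integral_add hp hq, integral_const_mul, hB, hp₁, hq₁]
    norm_num
  have hsum : ∫ x, (√(p x) + √(q x)) ^ 2 ∂μ = 2 + 2 * bhattacharyyaCoeff μ p q := by
    have hpt : ∀ x, (√(p x) + √(q x)) ^ 2 = p x + q x + 2 * (√(p x) * √(q x)) := fun x => by
      rw [add_sq, sq_sqrt (hp₀ x), sq_sqrt (hq₀ x)]; ring
    simp only [hpt]
    rw [integral_add (f := fun x => p x + q x) (hp.add hq) (hfg.const_mul 2),
      integral_add hp hq, integral_const_mul, hB, hp₁, hq₁]
    norm_num
  have hfactor : ∀ x, |p x - q x| = |√(p x) - √(q x)| * (√(p x) + √(q x)) := fun x => by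
    rw [← abs_of_nonneg (add_nonneg (sqrt_nonneg (p x)) (sqrt_nonneg (q x))), ← abs_mul]
    congr 1
    linear_combination sq_sqrt (hq₀ x) - sq_sqrt (hp₀ x)
  calc ∫ x, |p x - q x| ∂μ
      = ∫ x, |√(p x) - √(q x)| * (√(p x) + √(q x)) ∂μ := by simp only [hfactor]
    _ ≤ √(∫ x, |√(p x) - √(q x)| ^ 2 ∂μ) * √(∫ x, (√(p x) + √(q x)) ^ 2 ∂μ) :=
        integral_mul_le_sqrt_mul_sqrt (.of_forall fun _ => abs_nonneg _)
          (.of_forall fun _ => add_nonneg (sqrt_nonneg _) (sqrt_nonneg _)) (hf.sub hg).abs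
          (hf.add hg)
    _ = 2 * √(1 - bhattacharyyaCoeff μ p q ^ 2) := by
        rw [hdiff, hsum, ← sqrt_mul' _ (by linarith),
          show (2 - 2 * bhattacharyyaCoeff μ p q) * (2 + 2 * bhattacharyyaCoeff μ p q) =
            2 ^ 2 * (1 - bhattacharyyaCoeff μ p q ^ 2) by ring,
          sqrt_mul (by norm_num), sqrt_sq zero_le_two]

theorem abs_setIntegral_sub_le_sqrt_one_sub_bhattacharyyaCoeff_sq {p q : α → ℝ}
    (hp₀ : 0 ≤ p) (hq₀ : 0 ≤ q) (hp : Integrable p μ) (hq : Integrable q μ)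
    (hp₁ : ∫ x, p x ∂μ = 1) (hq₁ : ∫ x, q x ∂μ = 1) {A : Set α} (hA : MeasurableSet A) :
    |∫ x in A, p x ∂μ - ∫ x in A, q x ∂μ| ≤ √(1 - bhattacharyyaCoeff μ p q ^ 2) := by
  have h₁ := abs_setIntegral_sub_le_half_integral_abs_sub hp hq (hp₁.trans hq₁.symm) hA
  have h₂ := integral_abs_sub_le_two_mul_sqrt_one_sub_bhattacharyyaCoeff_sq hp₀ hq₀ hp hq hp₁ hq₁
  linarith

section Pi

variable {ι : Type*} [Fintype ι] {X : ι → Type*} [∀ i, MeasurableSpace (X i)]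

theorem bhattacharyyaCoeff_pi {μ : ∀ i, Measure (X i)} [∀ i, SigmaFinite (μ i)]
    {p q : ∀ i, X i → ℝ} (hp₀ : ∀ i, 0 ≤ p i) (hq₀ : ∀ i, 0 ≤ q i) :
    bhattacharyyaCoeff (Measure.pi μ) (fun x => ∏ i, p i (x i)) (fun x => ∏ i, q i (x i)) =
      ∏ i, bhattacharyyaCoeff (μ i) (p i) (q i) := by
  simp only [bhattacharyyaCoeff, ← Finset.prod_mul_distrib,
    sqrt_prod _ fun i _ => mul_nonneg (hp₀ i _) (hq₀ i _)]
  exact integral_fintype_prod_eq_prod fun i x => √(p i x * q i x)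

theorem Measure.pi_eq_withDensity_ofReal_prod {ν μ : ∀ i, Measure (X i)}
    [∀ i, SigmaFinite (ν i)] [∀ i, SigmaFinite (μ i)] {f : ∀ i, X i → ℝ} (hf₀ : ∀ i, 0 ≤ f i)
    (hf : ∀ i, Integrable (f i) (μ i))
    (hν : ∀ i, ν i = (μ i).withDensity fun x => ENNReal.ofReal (f i x)) :
    Measure.pi ν = (Measure.pi μ).withDensity fun x => ENNReal.ofReal (∏ i, f i (x i)) := by
  refine Measure.pi_eq (μ := ν) fun s hs => ?_
  rw [withDensity_apply _ (.univ_pi hs), Measure.restrict_pi_pi,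
    ← ofReal_integral_eq_lintegral_ofReal (Integrable.fintype_prod_dep fun i => (hf i).restrict)
      (.of_forall fun x => Finset.prod_nonneg fun i _ => hf₀ i (x i)),
    integral_fintype_prod_eq_prod,
    ENNReal.ofReal_prod_of_nonneg fun i _ => integral_nonneg (hf₀ i)]
  refine Finset.prod_congr rfl fun i _ => ?_
  rw [hν i, withDensity_apply _ (hs i),
    ofReal_integral_eq_lintegral_ofReal (hf i).restrict (.of_forall (hf₀ i))]

end Pi

end MeasureTheory

namespace ProbabilityTheory

theorem sqrt_gaussianPDFReal_mul_gaussianPDFReal (a b : ℝ) {v : ℝ≥0} (x : ℝ) :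
    √(gaussianPDFReal a v x * gaussianPDFReal b v x) =
      exp (-(a - b) ^ 2 / (8 * v)) * gaussianPDFReal ((a + b) / 2) v x := by
  rw [← sqrt_sq (mul_nonneg (exp_nonneg _) (gaussianPDFReal_nonneg _ _ _))]
  congr 1
  -- completing the square, each side written as a double so that its exponential is a square
  have hexp : -(x - a) ^ 2 / (2 * v) + -(x - b) ^ 2 / (2 * v) =
      -(a - b) ^ 2 / (8 * v) + -(a - b) ^ 2 / (8 * v) +
        (-(x - (a + b) / 2) ^ 2 / (2 * v) + -(x - (a + b) / 2) ^ 2 / (2 * v)) := by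
    ring
  simp only [gaussianPDFReal]
  calc _ = (√(2 * π * v))⁻¹ ^ 2 * exp (-(x - a) ^ 2 / (2 * v) + -(x - b) ^ 2 / (2 * v)) := by
        rw [exp_add]; ring
    _ = _ := by rw [hexp, exp_add, exp_add, exp_add]; ring

theorem bhattacharyyaCoeff_gaussianPDFReal (a b : ℝ) {v : ℝ≥0} (hv : v ≠ 0) :
    bhattacharyyaCoeff volume (gaussianPDFReal a v) (gaussianPDFReal b v) =
      exp (-(a - b) ^ 2 / (8 * v)) := by
  simp only [bhattacharyyaCoeff, sqrt_gaussianPDFReal_mul_gaussianPDFReal, integral_const_mul,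
    integral_gaussianPDFReal_eq_one _ hv, mul_one]

section Pi

variable {ι : Type*} [Fintype ι] {v : ℝ≥0}

theorem pi_gaussianReal_eq_withDensity (m : ι → ℝ) (hv : v ≠ 0) :
    Measure.pi (fun i => gaussianReal (m i) v) =
      volume.withDensity fun x => ENNReal.ofReal (∏ i, gaussianPDFReal (m i) v (x i)) :=
  Measure.pi_eq_withDensity_ofReal_prod (fun _ => gaussianPDFReal_nonneg _ _)
    (fun _ => integrable_gaussianPDFReal _ _) fun _ => gaussianReal_of_var_ne_zero _ hv

theorem prod_gaussianPDFReal_nonneg (m : ι → ℝ) (v : ℝ≥0) :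
    0 ≤ fun x : ι → ℝ => ∏ i, gaussianPDFReal (m i) v (x i) := fun _ =>
  Finset.prod_nonneg fun _ _ => gaussianPDFReal_nonneg _ _ _

theorem integrable_prod_gaussianPDFReal (m : ι → ℝ) (v : ℝ≥0) :
    Integrable fun x : ι → ℝ => ∏ i, gaussianPDFReal (m i) v (x i) :=
  Integrable.fintype_prod fun _ => integrable_gaussianPDFReal _ _

theorem toReal_pi_gaussianReal_apply (m : ι → ℝ) (hv : v ≠ 0) {A : Set (ι → ℝ)}
    (hA : MeasurableSet A) :
    (Measure.pi (fun i => gaussianReal (m i) v) A).toReal =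
      ∫ x in A, ∏ i, gaussianPDFReal (m i) v (x i) := by
  have h₀ := prod_gaussianPDFReal_nonneg m v
  rw [pi_gaussianReal_eq_withDensity m hv, withDensity_apply _ hA,
    ← ofReal_integral_eq_lintegral_ofReal (integrable_prod_gaussianPDFReal m v).integrableOn
      (.of_forall h₀), ENNReal.toReal_ofReal (setIntegral_nonneg hA fun x _ => h₀ x)]

theorem integral_prod_gaussianPDFReal (m : ι → ℝ) (hv : v ≠ 0) :
    ∫ x : ι → ℝ, ∏ i, gaussianPDFReal (m i) v (x i) = 1 := by
  rw [volume_pi, integral_fintype_prod_eq_prod fun i => gaussianPDFReal (m i) v]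
  exact Finset.prod_eq_one fun _ _ => integral_gaussianPDFReal_eq_one _ hv

theorem bhattacharyyaCoeff_prod_gaussianPDFReal (a b : ι → ℝ) (hv : v ≠ 0) :
    bhattacharyyaCoeff volume (fun x : ι → ℝ => ∏ i, gaussianPDFReal (a i) v (x i))
        (fun x => ∏ i, gaussianPDFReal (b i) v (x i)) =
      exp (-(∑ i, (a i - b i) ^ 2) / (8 * v)) := by
  rw [volume_pi, bhattacharyyaCoeff_pi (fun _ => gaussianPDFReal_nonneg _ _)
    (fun _ => gaussianPDFReal_nonneg _ _)]
  simp only [bhattacharyyaCoeff_gaussianPDFReal _ _ hv, ← exp_sum]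
  rw [← Finset.sum_div, Finset.sum_neg_distrib]

end Pi

end ProbabilityTheory

open MeasureTheory ProbabilityTheory in
theorem gaussian_shift_tv_bound (d : ℕ) (σ : NNReal) (hσ : 0 < σ) (v : Fin d → ℝ)
    (A : Set (Fin d → ℝ)) (hA : MeasurableSet A) :
    |((Measure.pi fun _ : Fin d => gaussianReal 0 (σ ^ 2)) A).toReal -
        ((Measure.pi fun i : Fin d => gaussianReal (v i) (σ ^ 2)) A).toReal|
      ≤ Real.sqrt (∑ i, (v i) ^ 2) / (2 * σ) := by
  have hv : σ ^ 2 ≠ 0 := pow_ne_zero 2 hσ.ne'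
  rw [toReal_pi_gaussianReal_apply _ hv hA, toReal_pi_gaussianReal_apply _ hv hA]
  refine (abs_setIntegral_sub_le_sqrt_one_sub_bhattacharyyaCoeff_sq
    (prod_gaussianPDFReal_nonneg _ _) (prod_gaussianPDFReal_nonneg _ _)
    (integrable_prod_gaussianPDFReal _ _) (integrable_prod_gaussianPDFReal _ _)
    (integral_prod_gaussianPDFReal _ hv) (integral_prod_gaussianPDFReal _ hv) hA).trans ?_
  rw [bhattacharyyaCoeff_prod_gaussianPDFReal _ _ hv, sqrt_le_left (by positivity)]
  simp only [zero_sub, neg_sq]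
  calc 1 - exp (-(∑ i, v i ^ 2) / (8 * ((σ ^ 2 : ℝ≥0) : ℝ))) ^ 2
      ≤ 2 * ((∑ i, v i ^ 2) / (8 * ((σ ^ 2 : ℝ≥0) : ℝ))) := by
        rw [neg_div]; exact Real.one_sub_exp_neg_sq_le _
    _ = (√(∑ i, v i ^ 2) / (2 * σ)) ^ 2 := by
        rw [div_pow, sq_sqrt (Finset.sum_nonneg fun i _ => sq_nonneg _), NNReal.coe_pow]
        ring
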